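/- arXiv:1808.09131 — 4 statements merged into one kernel-verified Lean document; each statement's English description precedes it below -/
import Mathlib

section
/- Let V be a real inner product space, let a, b, c ∈ V and γ ∈ ℝ. Set E := 2b − c, E⁺ := 2a − b and v := a + γ(a − E). Then ⟨3a − 4b + c, v⟩ = (‖a‖² + ‖E⁺‖²)/2 − (‖b‖² + ‖E‖²)/2 + (2γ + 1/2)·‖a − E‖² + γ·(‖a − b‖² − ‖b − c‖²). -/
/-!
Write `d := a - 2b + c = a - E` for the second difference. The test function splits as `a + γ d`,
and each part has its own identity. Testing with `a` gives the classical G-stability identity of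
BDF2, `⟨3a - 4b + c, a⟩ = (‖a‖² + ‖2a - b‖²)/2 - (‖b‖² + ‖2b - c‖²)/2 + ‖d‖²/2`. Testing with `d`
uses `3a - 4b + c = 2d + (a - c)` together with `a - c = (a - b) + (b - c)` and
`d = (a - b) - (b - c)`, so that `⟨3a - 4b + c, d⟩ = 2‖d‖² + ‖a - b‖² - ‖b - c‖²`.
-/

open scoped InnerProductSpace

section

variable {V : Type*} [NormedAddCommGroup V] [InnerProductSpace ℝ V]

theorem real_inner_add_sub_eq_norm_sq_sub_norm_sq (x y : V) :
    ⟪x + y, x - y⟫_ℝ = ‖x‖ ^ 2 - ‖y‖ ^ 2 := by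
  rw [inner_add_left, inner_sub_right, inner_sub_right, real_inner_comm x y,
    real_inner_self_eq_norm_sq, real_inner_self_eq_norm_sq]
  ring

theorem bdf2_inner_self_eq (a b c : V) :
    ⟪(3 : ℝ) • a - (4 : ℝ) • b + c, a⟫_ℝ =
      (‖a‖ ^ 2 + ‖(2 : ℝ) • a - b‖ ^ 2) / 2 - (‖b‖ ^ 2 + ‖(2 : ℝ) • b - c‖ ^ 2) / 2
        + ‖a - (2 : ℝ) • b + c‖ ^ 2 / 2 := by
  simp only [← real_inner_self_eq_norm_sq, inner_add_left, inner_add_right, inner_sub_left,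
    inner_sub_right, real_inner_smul_left, real_inner_smul_right, real_inner_comm a b,
    real_inner_comm a c, real_inner_comm b c]
  ring

theorem bdf2_inner_second_difference_eq (a b c : V) :
    ⟪(3 : ℝ) • a - (4 : ℝ) • b + c, a - (2 : ℝ) • b + c⟫_ℝ =
      2 * ‖a - (2 : ℝ) • b + c‖ ^ 2 + (‖a - b‖ ^ 2 - ‖b - c‖ ^ 2) := by
  set d := a - (2 : ℝ) • b + c
  have hsplit : (3 : ℝ) • a - (4 : ℝ) • b + c = (2 : ℝ) • d + ((a - b) + (b - c)) := by
    simp only [d, smul_add, smul_sub, smul_smul]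
    module
  have hd : d = (a - b) - (b - c) := by
    simp only [d]
    module
  rw [hsplit, inner_add_left, real_inner_smul_left, real_inner_self_eq_norm_sq, hd,
    real_inner_add_sub_eq_norm_sq_sub_norm_sq]

end

/-- The γ-weighted BDF2 energy identity (equation (Stab2_2nd) of the paper,
cleared of the time-step factor). -/
theorem bdf2_gamma_energy_identity {V : Type*} [NormedAddCommGroup V]
    [InnerProductSpace ℝ V] (a b c : V) (γ : ℝ)
    (E : V) (hE : E = (2 : ℝ) • b - c)
    (Eplus : V) (hEplus : Eplus = (2 : ℝ) • a - b)
    (v : V) (hv : v = a + γ • (a - E)) :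
    (inner ℝ ((3 : ℝ) • a - (4 : ℝ) • b + c) v : ℝ) =
      (‖a‖ ^ 2 + ‖Eplus‖ ^ 2) / 2 - (‖b‖ ^ 2 + ‖E‖ ^ 2) / 2
        + (2 * γ + 1 / 2) * ‖a - E‖ ^ 2
        + γ * (‖a - b‖ ^ 2 - ‖b - c‖ ^ 2) := by
  have hd : a - E = a - (2 : ℝ) • b + c := by
    rw [hE]
    abel
  subst hEplus hv
  rw [inner_add_right, real_inner_smul_right, hd, bdf2_inner_self_eq,
    bdf2_inner_second_difference_eq, hE]
  ring
end

section
/- Let γ ∈ [0, 2) and let g_γ be the stability function g_γ(x) = (x + γ − 1)² / (4γ(x − 1) + 2(γ − 1) + 2x). Then for every real x ≥ 7 one has g_γ(x) > 1 (and the denominator 4γ(x − 1) + 2(γ − 1) + 2x is positive for such x). -/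
/-- The stability function of the second-order ensemble scheme. -/
noncomputable def gstab (γ x : ℝ) : ℝ :=
  (x + γ - 1) ^ 2 / (4 * γ * (x - 1) + 2 * (γ - 1) + 2 * x)

/-- For viscosity ratios at least `7`, no `γ ∈ [0, 2)` gives a stability
constant below `1`. -/
theorem gstab_gt_one_of_seven_le (γ : ℝ) (hγ : γ ∈ Set.Ico (0 : ℝ) 2) :
    ∀ x : ℝ, 7 ≤ x →
      0 < 4 * γ * (x - 1) + 2 * (γ - 1) + 2 * x ∧ 1 < gstab γ x := by
  obtain ⟨h0, h2⟩ := hγ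
  intro x hx
  have hden : 0 < 4 * γ * (x - 1) + 2 * (γ - 1) + 2 * x := by nlinarith
  refine ⟨hden, ?_⟩
  rw [gstab, lt_div_iff₀ hden]
  nlinarith [sq_nonneg (x - 7), sq_nonneg (γ - 2)]
end

section
/- For every real number R with 1 < R < 7 there exist γ ∈ (0, 2) and σ ∈ (1/2, 1) such that for all x ∈ [1, R] the denominator 4γ(x − 1) + 2(γ − 1) + 2x is positive and g_γ(x) ≤ σ, where g_γ is the stability function g_γ(x) = (x + γ − 1)² / (4γ(x − 1) + 2(γ − 1) + 2x). -/
/-- For viscosity ratios below `7`, the parameter `γ` can be chosen so that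
the stability constant `σ` belongs to `(1/2, 1)`. -/
theorem gstab_le_sigma_of_ratio_lt_seven (R : ℝ) (hR1 : 1 < R) (hR7 : R < 7) :
    ∃ γ ∈ Set.Ioo (0 : ℝ) 2, ∃ σ ∈ Set.Ioo (1 / 2 : ℝ) 1,
      ∀ x ∈ Set.Icc (1 : ℝ) R,
        0 < 4 * γ * (x - 1) + 2 * (γ - 1) + 2 * x ∧ gstab γ x ≤ σ := by
  set s : ℝ := max (3/4) ((1 + Real.sqrt (8*R - 7))/8) with hs
  have h0 : (0:ℝ) ≤ 8*R - 7 := by linarith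
  have hsqrt_nonneg : 0 ≤ Real.sqrt (8*R - 7) := Real.sqrt_nonneg _
  have hsqrt_lt : Real.sqrt (8*R - 7) < 7 := by
    have : (8:ℝ)*R - 7 < 7^2 := by nlinarith
    have := Real.sqrt_lt_sqrt h0 this
    calc Real.sqrt (8*R-7) < Real.sqrt (7^2) := this
      _ = 7 := by rw [Real.sqrt_sq (by norm_num : (0:ℝ) ≤ 7)]
  have hs_lt1 : s < 1 := by
    apply max_lt (by norm_num)
    linarith
  have hs_ge : (3/4 : ℝ) ≤ s := le_max_left _ _
  have hs_half : (1/2 : ℝ) < s := by linarith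
  -- key inequality: R - 1 ≤ 8 s^2 - 2 s
  have hkey : R - 1 ≤ 8*s^2 - 2*s := by
    have h1 : (1 + Real.sqrt (8*R - 7))/8 ≤ s := le_max_right _ _
    have h2 : Real.sqrt (8*R - 7) ≤ 8*s - 1 := by linarith
    have h3 : 8*R - 7 ≤ (8*s - 1)^2 := by
      have := Real.sq_sqrt h0
      nlinarith [sq_nonneg (8*s - 1 - Real.sqrt (8*R-7))]
    nlinarith
  refine ⟨2*s, ⟨by linarith, by linarith⟩, s, ⟨hs_half, hs_lt1⟩, ?_⟩
  intro x hx
  obtain ⟨hx1, hxR⟩ := hx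
  have hden : 0 < 4 * (2*s) * (x - 1) + 2 * (2*s - 1) + 2 * x := by nlinarith
  refine ⟨hden, ?_⟩
  rw [gstab, div_le_iff₀ hden]
  -- (x + 2s - 1)^2 - s * denom = (x - 1)(x - (8s^2 - 2s + 1)) ≤ 0
  have hc : x ≤ 8*s^2 - 2*s + 1 := by linarith
  nlinarith [mul_nonneg (sub_nonneg.2 hx1) (sub_nonneg.2 hc)]
end

section
/- Let γ ∈ (0, 2) and let g_γ be the stability function g_γ(x) = (x + γ − 1)² / (4γ(x − 1) + 2(γ − 1) + 2x). Then for every real x ≥ 1 (where the denominator is positive), g_γ(x) < 1 if and only if x < 2 + γ + √(4γ + 1). -/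
/-- Exact characterization of the range of viscosity ratios for which the
stability function is below `1`. -/
theorem gstab_lt_one_iff (γ : ℝ) (hγ : γ ∈ Set.Ioo (0 : ℝ) 2) :
    ∀ x : ℝ, 1 ≤ x →
      0 < 4 * γ * (x - 1) + 2 * (γ - 1) + 2 * x ∧
        (gstab γ x < 1 ↔ x < 2 + γ + Real.sqrt (4 * γ + 1)) := by
  obtain ⟨h0, h2⟩ := hγ
  intro x hx
  have hD : 0 < 4 * γ * (x - 1) + 2 * (γ - 1) + 2 * x := by nlinarith
  refine ⟨hD, ?_⟩
  have hs : Real.sqrt (4 * γ + 1) ^ 2 = 4 * γ + 1 := Real.sq_sqrt (by linarith)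
  have hs1 : 1 + γ < Real.sqrt (4 * γ + 1) := by
    nlinarith [Real.sqrt_nonneg (4 * γ + 1)]
  rw [gstab, div_lt_one hD]
  constructor
  · intro h
    by_contra hc
    push_neg at hc
    nlinarith
  · intro h
    nlinarith
end
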